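/- arXiv:1607.01915 — 3 statements merged into one kernel-verified Lean document; each statement's English description precedes it below -/
import Mathlib

section
/- Let θ ∈ (0,1], a > 1, b > 0, set μ = a^{−1/θ}, α = (a−1)/(a+b−1), β = b/(a+b−1), φ(z) = 1 − (a(1−z)^{−θ} + b)^{−1/θ}, and φ_∞(z) = 1 − (1−z)/(α + β(1−z)^{θ})^{1/θ}. Then for all z ∈ [0,1), the Schröder functional equation holds: 1 − φ_∞(φ(z)) = μ (1 − φ_∞(z)). Moreover φ_∞(0) = 0 and φ_∞(z) → 1 as z → 1⁻. -/
/-!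
In the coordinate `w = (1 - z) ^ (-θ)` the map `φ` becomes the affine map `w ↦ a w + b`, and
`1 - φ_∞ z = (α w + β) ^ (-1/θ)`. The weights are chosen so that `α (a w + b) + β = a (α w + β)`,
i.e. `w ↦ α w + β` conjugates `φ` to multiplication by `a`; raising to the power `-1/θ` turns this
into multiplication by `μ = a ^ (-1/θ)`.
-/

open Filter Topology

lemma rpow_neg_one_div_rpow_neg {S θ : ℝ} (hS : 0 ≤ S) (hθ : θ ≠ 0) :
    (S ^ (-1 / θ)) ^ (-θ) = S := by
  rw [← Real.rpow_mul hS, show -1 / θ * -θ = 1 by field_simp, Real.rpow_one]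

lemma div_rpow_one_div_add_mul_rpow {u θ α β : ℝ} (hu : 0 < u) (hθ : θ ≠ 0)
    (hαβ : 0 ≤ α * u ^ (-θ) + β) :
    u / (α + β * u ^ θ) ^ (1 / θ) = (α * u ^ (-θ) + β) ^ (-1 / θ) := by
  have hfactor : α + β * u ^ θ = (α * u ^ (-θ) + β) * u ^ θ := by
    rw [add_mul, mul_assoc, ← Real.rpow_add hu, neg_add_cancel, Real.rpow_zero, mul_one]
  rw [hfactor, Real.mul_rpow hαβ (Real.rpow_nonneg hu.le _), ← Real.rpow_mul hu.le,
    mul_one_div_cancel hθ, Real.rpow_one, div_mul_cancel_right₀ hu.ne', neg_div,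
    Real.rpow_neg hαβ, one_div]

section Weights

variable {a b : ℝ} (hab : a + b - 1 ≠ 0)
include hab

lemma schroder_weights_add : (a - 1) / (a + b - 1) + b / (a + b - 1) = 1 := by
  rw [← add_div, div_eq_one_iff_eq hab]; ring

lemma schroder_weights_conj (w : ℝ) :
    (a - 1) / (a + b - 1) * (a * w + b) + b / (a + b - 1) =
      a * ((a - 1) / (a + b - 1) * w + b / (a + b - 1)) := by
  field_simp; ring

end Weights

lemma continuousAt_div_rpow_one_div_add_mul_rpow {θ α : ℝ} (β : ℝ) (hθ : 0 < θ) (hα : 0 < α) :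
    ContinuousAt (fun u : ℝ => u / (α + β * u ^ θ) ^ (1 / θ)) 0 := by
  have hden : ContinuousAt (fun u : ℝ => α + β * u ^ θ) 0 :=
    continuousAt_const.add (continuousAt_const.mul (Real.continuousAt_rpow_const _ _ (.inr hθ.le)))
  refine continuousAt_id.div (hden.rpow_const (.inl ?_)) ?_ <;>
    simp [Real.zero_rpow hθ.ne', hα.ne', (Real.rpow_pos_of_pos hα _).ne']

theorem schroder_subcritical_general
    (θ a b : ℝ) (hθ : 0 < θ) (ha : 1 < a) (hb : 0 < b) :
    let μ : ℝ := a ^ (-1 / θ)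
    let α : ℝ := (a - 1) / (a + b - 1)
    let β : ℝ := b / (a + b - 1)
    let φ : ℝ → ℝ := fun z => 1 - (a * (1 - z) ^ (-θ) + b) ^ (-1 / θ)
    let φinf : ℝ → ℝ := fun z => 1 - (1 - z) / (α + β * (1 - z) ^ θ) ^ (1 / θ)
    (∀ z ∈ Set.Ico (0 : ℝ) 1, 1 - φinf (φ z) = μ * (1 - φinf z)) ∧
      φinf 0 = 0 ∧
      Filter.Tendsto φinf (nhdsWithin 1 (Set.Iio 1)) (nhds 1) := by
  intro μ α β φ φinf
  have hab : 0 < a + b - 1 := by linarith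
  have hα : 0 < α := div_pos (by linarith) hab
  have hβ : 0 < β := div_pos hb hab
  refine ⟨fun z hz => ?_, ?_, ?_⟩
  · have hu : 0 < 1 - z := sub_pos.mpr hz.2
    set w := (1 - z) ^ (-θ)
    have hw : 0 < w := Real.rpow_pos_of_pos hu _
    have hS : 0 < a * w + b := by positivity
    have hφ : 1 - φ z = (a * w + b) ^ (-1 / θ) := sub_sub_cancel _ _
    have hφ_pos : 0 < 1 - φ z := hφ ▸ Real.rpow_pos_of_pos hS _
    calc 1 - φinf (φ z) = (α * (1 - φ z) ^ (-θ) + β) ^ (-1 / θ) :=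
          (sub_sub_cancel _ _).trans <| div_rpow_one_div_add_mul_rpow hφ_pos hθ.ne' (by
            rw [hφ, rpow_neg_one_div_rpow_neg hS.le hθ.ne']; positivity)
      _ = (a * (α * w + β)) ^ (-1 / θ) := by
          rw [hφ, rpow_neg_one_div_rpow_neg hS.le hθ.ne', schroder_weights_conj hab.ne']
      _ = μ * (α * w + β) ^ (-1 / θ) := Real.mul_rpow (by linarith) (by positivity)
      _ = μ * (1 - φinf z) := by
          rw [← div_rpow_one_div_add_mul_rpow hu hθ.ne' (by positivity)]
          exact congrArg _ (sub_sub_cancel _ _).symm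
  · have hαβ : α + β = 1 := schroder_weights_add hab.ne'
    simp [φinf, hαβ]
  · have hcont := continuousAt_div_rpow_one_div_add_mul_rpow β hθ hα
    have hlim : Tendsto (fun z : ℝ => 1 - z) (𝓝[<] 1) (𝓝 0) := by
      simpa using (tendsto_id.const_sub (1 : ℝ)).mono_left (nhdsWithin_le_nhds (a := (1 : ℝ)))
    simpa [φinf] using (hcont.tendsto.comp hlim).const_sub (1 : ℝ)

theorem schroder_subcritical
    (θ a b : ℝ) (hθ : 0 < θ) (hθ1 : θ ≤ 1) (ha : 1 < a) (hb : 0 < b) :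
    let μ : ℝ := a ^ (-1 / θ)
    let α : ℝ := (a - 1) / (a + b - 1)
    let β : ℝ := b / (a + b - 1)
    let φ : ℝ → ℝ := fun z => 1 - (a * (1 - z) ^ (-θ) + b) ^ (-1 / θ)
    let φinf : ℝ → ℝ := fun z => 1 - (1 - z) / (α + β * (1 - z) ^ θ) ^ (1 / θ)
    (∀ z ∈ Set.Ico (0 : ℝ) 1, 1 - φinf (φ z) = μ * (1 - φinf z)) ∧
      φinf 0 = 0 ∧
      Filter.Tendsto φinf (nhdsWithin 1 (Set.Iio 1)) (nhds 1) :=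
  schroder_subcritical_general θ a b hθ ha hb
end

section
/- Let θ be a real number and define the sequence g_1 = −θ and g_{m+1} = g_m(m + θ) for m ≥ 1 (i.e., g_m = −θ(1+θ)(2+θ)···(m−1+θ)). Then the partial Bell polynomials B_{k,l}(g_•) satisfy the three-term recursion B_{k+1,l}(g_•) = −θ B_{k,l−1}(g_•) + (k + lθ) B_{k,l}(g_•) for all k, l ≥ 1. -/
/-- The partial Bell polynomial `B_{k,l}(x_1, x_2, ...)` over `ℝ`:
`(k!/l!)` times the coefficient of `z^k` in `(∑_{j ≥ 1} x_j z^j / j!)^l`. -/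
noncomputable def partialBellR (x : ℕ → ℝ) (k l : ℕ) : ℝ :=
  (k.factorial : ℝ) / (l.factorial : ℝ) *
    PowerSeries.coeff (R := ℝ) k
      ((PowerSeries.mk fun j => if j = 0 then 0 else x j / (j.factorial : ℝ)) ^ l)

/-!
The exponential generating function `G(z) = ∑ g_m z^m / m! = 1 - (1 - z)^{-θ}` satisfies
`(1 - z) G' = θ (G - 1)`. Multiplying by `l G^{l-1}` gives `(1 - z) (G^l)' = l θ (G^l - G^{l-1})`,
and comparing the coefficients of `z^k` yields the recursion after rescaling by `k!/l!`.
-/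

open PowerSeries Nat

noncomputable def expGenFun (x : ℕ → ℝ) : ℝ⟦X⟧ :=
  mk fun j => if j = 0 then 0 else x j / (j ! : ℝ)

theorem partialBellR_eq_coeff_expGenFun_pow (x : ℕ → ℝ) (k l : ℕ) :
    partialBellR x k l = (k ! : ℝ) / (l ! : ℝ) * coeff k (expGenFun x ^ l) :=
  rfl

theorem coeff_one_sub_X_mul_derivative {R : Type*} [CommRing R] (P : R⟦X⟧) (k : ℕ) :
    coeff k ((1 - X) * d⁄dX R P) = (k + 1) * coeff (k + 1) P - k * coeff k P := by
  rw [sub_mul, one_mul, map_sub, coeff_derivative]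
  cases k with
  | zero => simp [mul_comm]
  | succ n =>
    rw [coeff_succ_X_mul, coeff_derivative]
    push_cast
    ring

theorem coeff_pow_succ_recursion {R : Type*} [CommRing R] {F : R⟦X⟧} {a : R}
    (hF : (1 - X) * d⁄dX R F = C a * (F - 1)) (k l : ℕ) :
    (k + 1) * coeff (k + 1) (F ^ (l + 1)) =
      (k + (l + 1) * a) * coeff k (F ^ (l + 1)) - (l + 1) * a * coeff k (F ^ l) := by
  have hpow : (1 - X) * d⁄dX R (F ^ (l + 1)) = C ((l + 1) * a) * (F ^ (l + 1) - F ^ l) := by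
    rw [derivative_pow, Nat.add_sub_cancel, mul_left_comm, hF, map_mul]
    simp only [map_add, map_natCast, map_one, Nat.cast_add, Nat.cast_one]
    ring
  have hk := congrArg (coeff k) hpow
  rw [coeff_one_sub_X_mul_derivative, coeff_C_mul, map_sub] at hk
  linear_combination hk

theorem one_sub_X_mul_derivative_expGenFun {θ : ℝ} {g : ℕ → ℝ} (hg1 : g 1 = -θ)
    (hgrec : ∀ m : ℕ, 1 ≤ m → g (m + 1) = g m * ((m : ℝ) + θ)) :
    (1 - X) * d⁄dX ℝ (expGenFun g) = C θ * (expGenFun g - 1) := by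
  ext k
  rw [coeff_one_sub_X_mul_derivative, coeff_C_mul, map_sub, coeff_one]
  cases k with
  | zero => simp [expGenFun, hg1]
  | succ n =>
    simp only [expGenFun, coeff_mk, if_neg (Nat.succ_ne_zero _), hgrec (n + 1) (by omega),
      factorial_succ (n + 1)]
    have : ((n + 1) ! : ℝ) ≠ 0 := by positivity
    field_simp
    push_cast
    ring

theorem partialBellR_succ_succ {θ : ℝ} {x : ℕ → ℝ}
    (hx : (1 - X) * d⁄dX ℝ (expGenFun x) = C θ * (expGenFun x - 1)) (k l : ℕ) :
    partialBellR x (k + 1) (l + 1) =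
      -θ * partialBellR x k l + ((k : ℝ) + (l + 1 : ℕ) * θ) * partialBellR x k (l + 1) := by
  simp only [partialBellR_eq_coeff_expGenFun_pow, factorial_succ]
  have hrec := coeff_pow_succ_recursion hx k l
  have : (k ! : ℝ) ≠ 0 := by positivity
  have : (l ! : ℝ) ≠ 0 := by positivity
  field_simp
  push_cast
  linear_combination (k ! * l ! : ℝ) * hrec

theorem bell_three_term_recursion (θ : ℝ) (g : ℕ → ℝ) (hg1 : g 1 = -θ)
    (hgrec : ∀ m : ℕ, 1 ≤ m → g (m + 1) = g m * ((m : ℝ) + θ)) :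
    ∀ k l : ℕ, 1 ≤ k → 1 ≤ l →
      partialBellR g (k + 1) l =
        -θ * partialBellR g k (l - 1) + ((k : ℝ) + (l : ℝ) * θ) * partialBellR g k l := by
  intro k l _ hl
  obtain ⟨j, rfl⟩ : ∃ j, l = j + 1 := ⟨l - 1, by omega⟩
  exact partialBellR_succ_succ (one_sub_X_mul_derivative_expGenFun hg1 hgrec) k j
end

section
/- Let z_c ≥ 1, a, b > 0, C = (a + b z_c)^{−1} ∈ (0,1), D^{−1} = aC ∈ (0,1), and φ_c(z) = 1 − (a(1−z)^{−1} + b z_c)^{−1}. Then for all integers i, j ≥ 1, the coefficient of z^j in φ_c(z)^i equals (1−C)^i (1 − D^{−1})^j Σ_{l=1}^{min(i,j)} C(i,l) C(j−1, l−1) [ (C/(1−C)) · (D^{−1}/(1−D^{−1})) ]^l. -/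
/-!
Put `C = (a + b z_c)⁻¹`, `D⁻¹ = a C` and `q = 1 - D⁻¹ = b z_c C`. Clearing denominators gives
`φ_c(z) = (1 - C) (1 + r q · z / (1 - q z))` with `r = C / (1 - C) · D⁻¹ / (1 - D⁻¹)`, so the
binomial theorem reduces the claim to the Taylor coefficients of `(z / (1 - q z))^l`. By the
Leibniz rule only the derivative of `z^l` of order exactly `l` survives at `0`, and the
`(j - l)`-th derivative of `(1 - q z)^{-l}` at `0` is the rising factorial `l^{(j-l)} q^{j-l}`;
together they give `[z^j] (z / (1 - q z))^l = C(j-1, l-1) q^{j-l}`.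
-/

open Finset Filter Topology

theorem Nat.choose_mul_factorial_mul_ascFactorial {m j : ℕ} (hm : 1 ≤ m) (hmj : m ≤ j) :
    j.choose m * m.factorial * m.ascFactorial (j - m) = (j - 1).choose (m - 1) * j.factorial := by
  have hasc : (m - 1).factorial * m.ascFactorial (j - m) = (j - 1).factorial := by
    rw [Nat.factorial_mul_ascFactorial' m (j - m) hm, show m + (j - m) - 1 = j - 1 by omega]
  have hchoose := Nat.choose_mul_factorial_mul_factorial (n := j - 1) (k := m - 1) (by omega)
  rw [show j - 1 - (m - 1) = j - m by omega] at hchoose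
  apply Nat.eq_of_mul_eq_mul_right (Nat.mul_pos (m - 1).factorial_pos (j - m).factorial_pos)
  calc j.choose m * m.factorial * m.ascFactorial (j - m) * ((m - 1).factorial * (j - m).factorial)
      = j.choose m * m.factorial * (j - m).factorial *
          ((m - 1).factorial * m.ascFactorial (j - m)) := by ring
    _ = j.factorial * ((j - 1).choose (m - 1) * (m - 1).factorial * (j - m).factorial) := by
        rw [Nat.choose_mul_factorial_mul_factorial hmj, hasc, hchoose]
    _ = _ := by ring

section TaylorCoefficients

variable {𝕜 : Type*} [NontriviallyNormedField 𝕜]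

theorem iteratedDeriv_comp_mul_left {F : Type*} [NormedAddCommGroup F] [NormedSpace 𝕜 F]
    (n : ℕ) (f : 𝕜 → F) (c : 𝕜) :
    iteratedDeriv n (fun x => f (c * x)) = fun x => c ^ n • iteratedDeriv n f (c * x) := by
  induction n generalizing f with
  | zero => simp
  | succ n ih =>
    funext x
    rw [iteratedDeriv_succ', funext (deriv_comp_mul_left c f), iteratedDeriv_fun_const_smul_field,
      ih, iteratedDeriv_succ', pow_succ', mul_smul]

theorem prod_range_neg_sub_eq_neg_one_pow_mul_ascFactorial (m n : ℕ) :
    ∏ k ∈ range n, (((-m : ℤ) : 𝕜) - k) = (-1) ^ n * m.ascFactorial n := by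
  rw [Nat.ascFactorial_eq_prod_range, Nat.cast_prod, ← card_range n, ← prod_const,
    card_range, ← prod_mul_distrib]
  exact prod_congr rfl fun k _ => by push_cast; ring

theorem iteratedDeriv_inv_one_sub_mul_pow_zero (q : 𝕜) (m n : ℕ) :
    iteratedDeriv n (fun w => ((1 - q * w)⁻¹) ^ m) 0 = m.ascFactorial n * q ^ n := by
  have hscale :=
    congrFun (iteratedDeriv_comp_mul_left n (fun y : 𝕜 => (y + 1) ^ (-m : ℤ)) (-q)) 0
  have hshift := congrFun (iteratedDeriv_comp_add_const n (fun y : 𝕜 => y ^ (-m : ℤ)) 1) 0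
  simp only [mul_zero] at hscale
  rw [show (fun w : 𝕜 => ((1 - q * w)⁻¹) ^ m) = fun w => (-q * w + 1) ^ (-m : ℤ) by
    funext w; rw [zpow_neg, zpow_natCast, inv_pow]; ring_nf]
  rw [hscale, hshift, iteratedDeriv_eq_iterate, iter_deriv_zpow,
    prod_range_neg_sub_eq_neg_one_pow_mul_ascFactorial, zero_add, one_zpow, mul_one, smul_eq_mul,
    ← mul_assoc, ← mul_pow, neg_mul_neg, mul_one, mul_comm]

theorem iteratedDeriv_pow_mul_inv_one_sub_mul_pow_zero (q : 𝕜) (m j : ℕ) :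
    iteratedDeriv j (fun w => w ^ m * ((1 - q * w)⁻¹) ^ m) 0 =
      j.choose m * m.factorial * m.ascFactorial (j - m) * q ^ (j - m) := by
  have hq : (1 : 𝕜) - q * 0 ≠ 0 := by simp
  rw [iteratedDeriv_fun_mul (by fun_prop) (by fun_prop (disch := exact hq))]
  simp only [iteratedDeriv_fun_pow_zero, iteratedDeriv_inv_one_sub_mul_pow_zero, Nat.cast_ite,
    Nat.cast_zero, mul_ite, ite_mul, mul_zero, zero_mul, sum_ite_eq', mem_range]
  split_ifs with hmj
  · ring
  · rw [Nat.choose_eq_zero_of_lt (by omega)]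
    simp

theorem iteratedDeriv_one_add_mul_mul_inv_one_sub_mul_pow_zero [CharZero 𝕜] (c q : 𝕜) (i : ℕ)
    {j : ℕ} (hj : 1 ≤ j) :
    iteratedDeriv j (fun w => (1 + c * (w * (1 - q * w)⁻¹)) ^ i) 0 / j.factorial =
      ∑ l ∈ Icc 1 (min i j), i.choose l * (j - 1).choose (l - 1) * c ^ l * q ^ (j - l) := by
  have hq : (1 : 𝕜) - q * 0 ≠ 0 := by simp
  have hexpand : (fun w => (1 + c * (w * (1 - q * w)⁻¹)) ^ i) =
      fun w => ∑ l ∈ range (i + 1), i.choose l * c ^ l * (w ^ l * ((1 - q * w)⁻¹) ^ l) := by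
    funext w
    rw [add_comm, add_pow]
    exact sum_congr rfl fun l _ => by ring
  rw [hexpand, iteratedDeriv_fun_sum fun l _ => by fun_prop (disch := exact hq), sum_div]
  simp only [iteratedDeriv_const_mul_field, iteratedDeriv_pow_mul_inv_one_sub_mul_pow_zero]
  refine (sum_subset (fun l hl => ?_) fun l hli hl => ?_).symm.trans (sum_congr rfl fun l hl => ?_)
  · simp only [mem_Icc, mem_range] at hl ⊢; omega
  · simp only [mem_Icc, mem_range, le_min_iff, not_and_or, not_le] at hli hl
    rcases lt_or_ge j l with hjl | hlj
    · simp [Nat.choose_eq_zero_of_lt hjl]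
    · obtain rfl : l = 0 := by omega
      rw [show j - 0 = (j - 1).succ by omega, Nat.zero_ascFactorial]
      simp
  · simp only [mem_Icc, le_min_iff] at hl
    have h := congrArg (Nat.cast : ℕ → 𝕜) (Nat.choose_mul_factorial_mul_ascFactorial hl.1 hl.2.2)
    push_cast at h
    rw [div_eq_iff (Nat.cast_ne_zero.mpr j.factorial_ne_zero)]
    linear_combination (↑(i.choose l) * c ^ l * q ^ (j - l)) * h

end TaylorCoefficients

theorem one_sub_inv_mul_inv_one_sub_add_eq {K : Type*} [Field K] {a β C q z : K}
    (hC : C * (a + β) = 1) (hq : a * C + q = 1) (hz : 1 - z ≠ 0) (hqz : 1 - q * z ≠ 0) :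
    1 - (a * (1 - z)⁻¹ + β)⁻¹ = 1 - C + C * (a * C) * (z * (1 - q * z)⁻¹) := by
  have hinv : (a * (1 - z)⁻¹ + β)⁻¹ = C * (1 - z) * (1 - q * z)⁻¹ := by
    refine inv_eq_of_mul_eq_one_right ?_
    linear_combination (a * C * (1 - q * z)⁻¹) * inv_mul_cancel₀ hz
      + ((1 - z) * (1 - q * z)⁻¹) * hC + (z * (1 - q * z)⁻¹) * hq + mul_inv_cancel₀ hqz
  rw [hinv]
  linear_combination (-C) * mul_inv_cancel₀ hqz - (C * z * (1 - q * z)⁻¹) * hq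

theorem theta_one_transition_entries_general (zc a b : ℝ) (habz : 1 < a + b * zc)
    (haC : a * (a + b * zc)⁻¹ < 1) :
    let C : ℝ := (a + b * zc)⁻¹
    let Dinv : ℝ := a * C
    let φc : ℝ → ℝ := fun z => 1 - (a * (1 - z)⁻¹ + b * zc)⁻¹
    ∀ i j : ℕ, 1 ≤ i → 1 ≤ j →
      iteratedDeriv j (fun z => (φc z) ^ i) 0 / (j.factorial : ℝ) =
        (1 - C) ^ i * (1 - Dinv) ^ j *
          ∑ l ∈ Finset.Icc 1 (min i j),
            (i.choose l : ℝ) * ((j - 1).choose (l - 1) : ℝ) *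
              ((C / (1 - C)) * (Dinv / (1 - Dinv))) ^ l := by
  intro C Dinv φc i j _ hj
  have hC : C * (a + b * zc) = 1 := inv_mul_cancel₀ (by linarith)
  have hC1 : 1 - C ≠ 0 := sub_ne_zero.mpr (inv_lt_one_of_one_lt₀ habz).ne'
  have hq : 1 - Dinv ≠ 0 := sub_ne_zero.mpr haC.ne'
  set q := 1 - Dinv
  set r := C / (1 - C) * (Dinv / q) with hr_def
  have hrq : r * q = C * Dinv / (1 - C) := by rw [hr_def]; field_simp
  clear_value r
  have hφ : (fun z => φc z ^ i) =ᶠ[𝓝 0]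
      fun z => (1 - C) ^ i * (1 + r * q * (z * (1 - q * z)⁻¹)) ^ i := by
    have hz : ∀ᶠ z : ℝ in 𝓝 0, 1 - z ≠ 0 :=
      (continuous_const.sub continuous_id).continuousAt.eventually_ne (by norm_num)
    have hqz : ∀ᶠ z : ℝ in 𝓝 0, 1 - q * z ≠ 0 :=
      (continuous_const.sub (continuous_const_mul q)).continuousAt.eventually_ne (by norm_num)
    filter_upwards [hz, hqz] with z hz hqz
    show (1 - (a * (1 - z)⁻¹ + b * zc)⁻¹) ^ i = _
    rw [← mul_pow, one_sub_inv_mul_inv_one_sub_add_eq hC (by linarith) hz hqz, hrq]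
    field_simp
    ring
  rw [hφ.iteratedDeriv_eq, iteratedDeriv_const_mul_field, mul_div_assoc,
    iteratedDeriv_one_add_mul_mul_inv_one_sub_mul_pow_zero _ _ _ hj, mul_assoc]
  congr 1
  rw [mul_sum]
  refine sum_congr rfl fun l hl => ?_
  rw [mem_Icc, le_min_iff] at hl
  rw [mul_pow, ← pow_mul_pow_sub q hl.2.2]
  ring

theorem theta_one_transition_entries (zc a b : ℝ) (hzc : 1 ≤ zc) (ha : 0 < a)
    (hb : 0 < b) (habz : 1 < a + b * zc) (haC : a * (a + b * zc)⁻¹ < 1) :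
    let C : ℝ := (a + b * zc)⁻¹
    let Dinv : ℝ := a * C
    let φc : ℝ → ℝ := fun z => 1 - (a * (1 - z)⁻¹ + b * zc)⁻¹
    ∀ i j : ℕ, 1 ≤ i → 1 ≤ j →
      iteratedDeriv j (fun z => (φc z) ^ i) 0 / (j.factorial : ℝ) =
        (1 - C) ^ i * (1 - Dinv) ^ j *
          ∑ l ∈ Finset.Icc 1 (min i j),
            (i.choose l : ℝ) * ((j - 1).choose (l - 1) : ℝ) *
              ((C / (1 - C)) * (Dinv / (1 - Dinv))) ^ l :=
  theta_one_transition_entries_general zc a b habz haC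
end
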